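/- arXiv:1406.0327 — 6 statements merged into one kernel-verified Lean document; each statement's English description precedes it below -/
import Mathlib

section
/- Let V be a real inner product space of dimension at least 3, and let X and Y be unit vectors in V. If the quantity ⟪Y,Z⟫² takes the same value for all unit vectors Z orthogonal to X (i.e. for any two unit vectors Z, Z' orthogonal to X one has ⟪Y,Z⟫² = ⟪Y,Z'⟫²), then Y = X or Y = −X. -/
open scoped RealInnerProductSpace

/-- Algebraic core of Lemma 2.1: if `⟪Y,Z⟫²` is the same for all unit vectors `Z`
orthogonal to `X`, then `Y = X` or `Y = -X`. -/
theorem stmt_0 {V : Type*} [NormedAddCommGroup V] [InnerProductSpace ℝ V]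
    (hdim : 3 ≤ Module.finrank ℝ V) (X Y : V) (hX : ‖X‖ = 1) (hY : ‖Y‖ = 1)
    (h : ∀ Z Z' : V, ‖Z‖ = 1 → ‖Z'‖ = 1 → ⟪X, Z⟫ = 0 → ⟪X, Z'⟫ = 0 →
      ⟪Y, Z⟫ ^ 2 = ⟪Y, Z'⟫ ^ 2) :
    Y = X ∨ Y = -X := by
  classical
  have hfd : FiniteDimensional ℝ V := FiniteDimensional.of_finrank_pos (by omega)
  set c := ⟪X, Y⟫ with hc
  set W := Y - c • X with hWdef
  have hXX : ⟪X, X⟫ = (1 : ℝ) := by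
    rw [real_inner_self_eq_norm_sq, hX]; norm_num
  have hXW : ⟪X, W⟫ = 0 := by
    simp [hWdef, inner_sub_right, inner_smul_right, hXX, hX, hc]
  have hW0 : W = 0 := by
    by_contra hW0
    -- pick a unit vector orthogonal to both X and W
    set K := (Submodule.span ℝ ({X, W} : Set V))ᗮ with hK
    have hKne : K ≠ ⊥ := by
      intro hbot
      have h1 : Module.finrank ℝ (Submodule.span ℝ ({X, W} : Set V)) ≤ 2 := by
        have hset : ({X, W} : Set V) = (↑({X, W} : Finset V) : Set V) := by simp
        rw [hset]
        exact (finrank_span_finset_le_card _).trans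
          ((Finset.card_insert_le _ _).trans (by simp))
      have h2 := Submodule.finrank_add_finrank_orthogonal
        (K := Submodule.span ℝ ({X, W} : Set V))
      rw [← hK, hbot] at h2
      simp [finrank_bot] at h2
      omega
    obtain ⟨v, hvK, hv0⟩ := Submodule.exists_mem_ne_zero_of_ne_bot hKne
    have hvX : ⟪X, v⟫ = 0 :=
      (Submodule.mem_orthogonal _ v).mp hvK X (Submodule.subset_span (by simp))
    have hvW : ⟪W, v⟫ = 0 :=
      (Submodule.mem_orthogonal _ v).mp hvK W (Submodule.subset_span (by simp))
    have hvY : ⟪Y, v⟫ = 0 := by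
      have : Y = W + c • X := by rw [hWdef]; abel
      rw [this, inner_add_left, inner_smul_left]
      simp [hvW, hvX]
    set Z := ‖W‖⁻¹ • W with hZ
    set Z' := ‖v‖⁻¹ • v with hZ'
    have hnW : ‖W‖ ≠ 0 := by simpa using hW0
    have hnv : ‖v‖ ≠ 0 := by simpa using hv0
    have hZn : ‖Z‖ = 1 := by
      rw [hZ, norm_smul, norm_inv, norm_norm, inv_mul_cancel₀ hnW]
    have hZn' : ‖Z'‖ = 1 := by
      rw [hZ', norm_smul, norm_inv, norm_norm, inv_mul_cancel₀ hnv]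
    have hXZ : ⟪X, Z⟫ = 0 := by rw [hZ, inner_smul_right, hXW]; ring
    have hXZ' : ⟪X, Z'⟫ = 0 := by rw [hZ', inner_smul_right, hvX]; ring
    have key := h Z Z' hZn hZn' hXZ hXZ'
    have hYZ : ⟪Y, Z⟫ = ‖W‖ := by
      have hYW : ⟪Y, W⟫ = ‖W‖ ^ 2 := by
        have : Y = W + c • X := by rw [hWdef]; abel
        rw [this, inner_add_left, inner_smul_left]
        simp [hXW, real_inner_self_eq_norm_sq]
      rw [hZ, inner_smul_right, hYW]
      field_simp
    have hYZ' : ⟪Y, Z'⟫ = 0 := by rw [hZ', inner_smul_right, hvY]; ring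
    rw [hYZ, hYZ'] at key
    exact hnW (by nlinarith [norm_nonneg W])
  have hYcX : Y = c • X := sub_eq_zero.mp hW0
  have hcabs : |c| = 1 := by
    have : ‖Y‖ = |c| * ‖X‖ := by rw [hYcX, norm_smul, Real.norm_eq_abs]
    rw [hY, hX, mul_one] at this
    exact this.symm
  rcases abs_eq (by norm_num : (0:ℝ) ≤ 1) |>.mp hcabs with h1 | h1
  · left; rw [hYcX, h1, one_smul]
  · right; rw [hYcX, h1, neg_one_smul]
end

section
/- Let n ≥ 3 be a natural number and H, N real numbers. Let λ : Fin n → ℝ be a monotone (nondecreasing) function whose multiset of values consists of the value H/2 with multiplicity n−1 and the value N − H/2 with multiplicity 1. For 1 ≤ m < n define G_m = (n−m)·(∑_{i=0}^{m−1} λ(i)) + m·(∑_{i=m}^{n−1} λ(i)). Then: G_1 = N + (n−2)·min(H,N); G_2 = 2N + (n−2)H + (n−4)·min(H,N); and if n ≥ 4, G_3 = 3N + 2(n−3)H + (n−6)·min(H,N). -/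
private lemma aux_card_lt (n m : ℕ) (h : m ≤ n) :
    (Finset.univ.filter fun i : Fin n => (i:ℕ) < m).card = m := by
  rcases h.lt_or_eq with h | h
  · have e : (Finset.univ.filter fun i : Fin n => (i:ℕ) < m) = Finset.Iio (⟨m, h⟩ : Fin n) := by
      ext i; simp [Fin.lt_def]
    rw [e, Fin.card_Iio]
  · have hall : ∀ i : Fin n, (i:ℕ) < m := fun i => h ▸ i.is_lt
    rw [Finset.filter_true_of_mem (fun i _ => hall i), Finset.card_univ, Fintype.card_fin, h]

private lemma aux_filter_not (n m : ℕ) :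
    (Finset.univ.filter fun i : Fin n => ¬ (i:ℕ) < m)
      = (Finset.univ.filter fun i : Fin n => m ≤ (i:ℕ)) := by
  simp [not_lt]

private lemma aux_card_ge (n m : ℕ) (h : m ≤ n) :
    (Finset.univ.filter fun i : Fin n => m ≤ (i:ℕ)).card = n - m := by
  have h2 := Finset.card_filter_add_card_filter_not
    (s := (Finset.univ : Finset (Fin n))) (p := fun i : Fin n => (i:ℕ) < m)
  rw [aux_filter_not] at h2
  rw [aux_card_lt n m h, Finset.card_univ, Fintype.card_fin] at h2
  omega

/-- Key computation in Lemma 2.6: the Weitzenböck curvature functions `G_m` of a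
1-QC manifold, where the Schouten operator has eigenvalues `H/2` with multiplicity
`n-1` and `N - H/2` with multiplicity `1`, arranged in nondecreasing order. -/
theorem stmt_1 (n : ℕ) (hn : 3 ≤ n) (H N : ℝ) (l : Fin n → ℝ) (hmono : Monotone l)
    (hvals : (Finset.univ.val.map l) =
      Multiset.replicate (n - 1) (H / 2) + {N - H / 2})
    (G : ℕ → ℝ)
    (hG : ∀ m, G m =
      ((n : ℝ) - m) * (∑ i ∈ Finset.univ.filter (fun i : Fin n => (i : ℕ) < m), l i) +
      (m : ℝ) * (∑ i ∈ Finset.univ.filter (fun i : Fin n => m ≤ (i : ℕ)), l i)) :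
    G 1 = N + ((n : ℝ) - 2) * min H N ∧
    G 2 = 2 * N + ((n : ℝ) - 2) * H + ((n : ℝ) - 4) * min H N ∧
    (4 ≤ n → G 3 = 3 * N + 2 * ((n : ℝ) - 3) * H + ((n : ℝ) - 6) * min H N) := by
  have hn1 : 1 ≤ n - 1 := by omega
  -- every value of l is H/2 or N - H/2
  have hmem : ∀ i : Fin n, l i = H / 2 ∨ l i = N - H / 2 := by
    intro i
    have hi : l i ∈ Finset.univ.val.map l :=
      Multiset.mem_map_of_mem _ (Finset.mem_univ i)
    rw [hvals] at hi
    simp only [Multiset.mem_add, Multiset.mem_replicate, Multiset.mem_singleton] at hi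
    tauto
  -- the total sum
  have hT : ∑ i, l i = ((n:ℝ) - 1) * (H / 2) + (N - H / 2) := by
    have h1 : ∑ i, l i = ((Finset.univ : Finset (Fin n)).val.map l).sum := rfl
    rw [hvals] at h1
    rw [h1]
    simp only [Multiset.sum_add, Multiset.sum_replicate, Multiset.sum_singleton, nsmul_eq_mul]
    have : ((n - 1 : ℕ) : ℝ) = (n : ℝ) - 1 := by
      push_cast [Nat.cast_sub (by omega : 1 ≤ n)]; ring
    rw [this]
  -- splitting the sum
  have hadd : ∀ m : ℕ,
      (∑ i ∈ Finset.univ.filter (fun i : Fin n => (i : ℕ) < m), l i) +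
      (∑ i ∈ Finset.univ.filter (fun i : Fin n => m ≤ (i : ℕ)), l i) = ∑ i, l i := by
    intro m
    rw [← aux_filter_not n m]
    exact Finset.sum_filter_add_sum_filter_not _ _ _
  rcases le_total H N with hA | hB
  · -- case H ≤ N : min H N = H
    have hkey : ∀ i : Fin n, (i:ℕ) < n - 1 → l i = H / 2 := by
      rcases eq_or_lt_of_le hA with heq | hlt
      · intro i _
        rcases hmem i with h | h
        · exact h
        · rw [h, ← heq]; ring
      · -- H < N, unique index with value N - H/2
        have hne : N - H / 2 ≠ H / 2 := by intro h; linarith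
        have hcount : (Finset.univ.filter fun i : Fin n => l i = N - H / 2).card = 1 := by
          have hc : Multiset.count (N - H / 2) (Finset.univ.val.map l) = 1 := by
            have hne' : H / 2 ≠ N - H / 2 := fun h => hne h.symm
            rw [hvals]
            simp [Multiset.count_replicate, hne, hne']
          rw [Multiset.count_map] at hc
          simpa [Finset.card, Finset.filter, eq_comm] using hc
        obtain ⟨j, hj⟩ := Finset.card_eq_one.mp hcount
        have hiff : ∀ i : Fin n, l i = N - H / 2 ↔ i = j := by
          intro i
          constructor
          · intro h
            have : i ∈ Finset.univ.filter fun i : Fin n => l i = N - H / 2 := by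
              simp [h]
            rw [hj] at this; simpa using this
          · intro h
            have : j ∈ Finset.univ.filter fun i : Fin n => l i = N - H / 2 := by
              rw [hj]; simp
            subst h; simpa using this
        intro i hi
        by_contra hne2
        have hival : l i = N - H / 2 := (hmem i).resolve_left hne2
        have hij : i = j := (hiff i).mp hival
        set top : Fin n := ⟨n - 1, by omega⟩ with htop
        have htopne : l top = H / 2 := by
          rcases hmem top with h | h
          · exact h
          · exfalso
            have hx : top = i := ((hiff top).mp h).trans hij.symm
            rw [← hx] at hi
            exact absurd hi (by simp [htop])
        have hle : i ≤ top := by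
          rw [Fin.le_def]
          simp [htop]
          omega
        have := hmono hle
        rw [hival, htopne] at this
        linarith
    have hS : ∀ m : ℕ, m ≤ n - 1 →
        (∑ i ∈ Finset.univ.filter (fun i : Fin n => (i : ℕ) < m), l i) = (m : ℝ) * (H / 2) := by
      intro m hm
      rw [Finset.sum_congr rfl
        (fun i hi => hkey i (lt_of_lt_of_le (Finset.mem_filter.mp hi).2 hm))]
      rw [Finset.sum_const, aux_card_lt n m (by omega), nsmul_eq_mul]
    have hmin : min H N = H := min_eq_left hA
    refine ⟨?_, ?_, ?_⟩
    · have e1 := hS 1 (by omega)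
      have f1 := hadd 1
      rw [e1, hT] at f1
      rw [hG 1, e1, hmin, show (∑ i ∈ Finset.univ.filter (fun i : Fin n => 1 ≤ (i : ℕ)), l i)
        = ((n:ℝ) - 1) * (H / 2) + (N - H / 2) - (1:ℕ) * (H / 2) by linarith]
      push_cast; ring
    · have e2 := hS 2 (by omega)
      have f2 := hadd 2
      rw [e2, hT] at f2
      rw [hG 2, e2, hmin, show (∑ i ∈ Finset.univ.filter (fun i : Fin n => 2 ≤ (i : ℕ)), l i)
        = ((n:ℝ) - 1) * (H / 2) + (N - H / 2) - (2:ℕ) * (H / 2) by linarith]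
      push_cast; ring
    · intro hn4
      have e3 := hS 3 (by omega)
      have f3 := hadd 3
      rw [e3, hT] at f3
      rw [hG 3, e3, hmin, show (∑ i ∈ Finset.univ.filter (fun i : Fin n => 3 ≤ (i : ℕ)), l i)
        = ((n:ℝ) - 1) * (H / 2) + (N - H / 2) - (3:ℕ) * (H / 2) by linarith]
      push_cast; ring
  · -- case N ≤ H : min H N = N
    have hkey : ∀ i : Fin n, 1 ≤ (i:ℕ) → l i = H / 2 := by
      rcases eq_or_lt_of_le hB with heq | hlt
      · intro i _
        rcases hmem i with h | h
        · exact h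
        · rw [h, heq]; ring
      · have hne : N - H / 2 ≠ H / 2 := by intro h; linarith
        have hcount : (Finset.univ.filter fun i : Fin n => l i = N - H / 2).card = 1 := by
          have hc : Multiset.count (N - H / 2) (Finset.univ.val.map l) = 1 := by
            have hne' : H / 2 ≠ N - H / 2 := fun h => hne h.symm
            rw [hvals]
            simp [Multiset.count_replicate, hne, hne']
          rw [Multiset.count_map] at hc
          simpa [Finset.card, Finset.filter, eq_comm] using hc
        obtain ⟨j, hj⟩ := Finset.card_eq_one.mp hcount
        have hiff : ∀ i : Fin n, l i = N - H / 2 ↔ i = j := by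
          intro i
          constructor
          · intro h
            have : i ∈ Finset.univ.filter fun i : Fin n => l i = N - H / 2 := by
              simp [h]
            rw [hj] at this; simpa using this
          · intro h
            have : j ∈ Finset.univ.filter fun i : Fin n => l i = N - H / 2 := by
              rw [hj]; simp
            subst h; simpa using this
        intro i hi
        by_contra hne2
        have hival : l i = N - H / 2 := (hmem i).resolve_left hne2
        have hij : i = j := (hiff i).mp hival
        set bot : Fin n := ⟨0, by omega⟩ with hbot
        have hbotne : l bot = H / 2 := by
          rcases hmem bot with h | h
          · exact h
          · exfalso
            have : bot = j := (hiff bot).mp h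
            rw [← hij] at this
            rw [← this] at hi
            simp [hbot] at hi
        have hle : bot ≤ i := by
          rw [Fin.le_def]
          simp [hbot]
        have := hmono hle
        rw [hival, hbotne] at this
        linarith
    have hS : ∀ m : ℕ, 1 ≤ m → m ≤ n →
        (∑ i ∈ Finset.univ.filter (fun i : Fin n => m ≤ (i : ℕ)), l i)
          = ((n : ℝ) - m) * (H / 2) := by
      intro m hm1 hmn
      rw [Finset.sum_congr rfl
        (fun i hi => hkey i (le_trans hm1 (Finset.mem_filter.mp hi).2))]
      rw [Finset.sum_const, aux_card_ge n m hmn, nsmul_eq_mul]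
      congr 1
      push_cast [Nat.cast_sub hmn]; ring
    have hmin : min H N = N := min_eq_right hB
    refine ⟨?_, ?_, ?_⟩
    · have e1 := hS 1 (by omega) (by omega)
      have f1 := hadd 1
      rw [e1, hT] at f1
      rw [hG 1, e1, hmin, show (∑ i ∈ Finset.univ.filter (fun i : Fin n => (i : ℕ) < 1), l i)
        = ((n:ℝ) - 1) * (H / 2) + (N - H / 2) - ((n:ℝ) - 1) * (H / 2) by linarith]
      push_cast; ring
    · have e2 := hS 2 (by omega) (by omega)
      have f2 := hadd 2
      rw [e2, hT] at f2
      rw [hG 2, e2, hmin, show (∑ i ∈ Finset.univ.filter (fun i : Fin n => (i : ℕ) < 2), l i)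
        = ((n:ℝ) - 1) * (H / 2) + (N - H / 2) - ((n:ℝ) - 2) * (H / 2) by linarith]
      push_cast; ring
    · intro hn4
      have e3 := hS 3 (by omega) (by omega)
      have f3 := hadd 3
      rw [e3, hT] at f3
      rw [hG 3, e3, hmin, show (∑ i ∈ Finset.univ.filter (fun i : Fin n => (i : ℕ) < 3), l i)
        = ((n:ℝ) - 1) * (H / 2) + (N - H / 2) - ((n:ℝ) - 3) * (H / 2) by linarith]
      push_cast; ring
end

section
/- Let V be a real inner product space, ξ ∈ V a unit vector, and H, N, κ ∈ ℝ with H + κ > 0. Define η(X) = ⟪X,ξ⟫, the bilinear form h(X,Y) = √(H+κ)·⟪X,Y⟫ + ((N−H)/√(H+κ))·η(X)η(Y), and the 4-linear map R(X,Y,Z,W) = H·(⟪Y,Z⟫⟪X,W⟫ − ⟪X,Z⟫⟪Y,W⟫) + (N−H)·(⟪Y,Z⟫η(X)η(W) − ⟪X,Z⟫η(Y)η(W) + ⟪X,W⟫η(Y)η(Z) − ⟪Y,W⟫η(X)η(Z)). Then for all X, Y, Z, W ∈ V: R(X,Y,Z,W) = −κ·(⟪Y,Z⟫⟪X,W⟫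 − ⟪X,Z⟫⟪Y,W⟫) + h(Y,Z)h(X,W) − h(X,Z)h(Y,W). -/
open scoped RealInnerProductSpace

/-- The Gauss equation for the candidate second fundamental form `h` of the
isometric immersion of a 1-QC manifold into `ℍ_κ^{n+1}` (Proposition 2.12),
verified as a pointwise algebraic identity. -/
theorem stmt_3 {V : Type*} [NormedAddCommGroup V] [InnerProductSpace ℝ V]
    (ξ : V) (hξ : ‖ξ‖ = 1) (H N κ : ℝ) (hHκ : 0 < H + κ)
    (η : V → ℝ) (hη : ∀ X, η X = ⟪X, ξ⟫)
    (h : V → V → ℝ)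
    (hh : ∀ X Y, h X Y = Real.sqrt (H + κ) * ⟪X, Y⟫ +
      (N - H) / Real.sqrt (H + κ) * (η X * η Y))
    (R : V → V → V → V → ℝ)
    (hR : ∀ X Y Z W, R X Y Z W =
      H * (⟪Y, Z⟫ * ⟪X, W⟫ - ⟪X, Z⟫ * ⟪Y, W⟫) +
      (N - H) * (⟪Y, Z⟫ * (η X * η W) - ⟪X, Z⟫ * (η Y * η W) +
        ⟪X, W⟫ * (η Y * η Z) - ⟪Y, W⟫ * (η X * η Z))) :
    ∀ X Y Z W : V, R X Y Z W =
      -κ * (⟪Y, Z⟫ * ⟪X, W⟫ - ⟪X, Z⟫ * ⟪Y, W⟫) + h Y Z * h X W - h X Z * h Y W := by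
  intro X Y Z W
  have hs0 : Real.sqrt (H + κ) ≠ 0 := by positivity
  have hss : Real.sqrt (H + κ) * Real.sqrt (H + κ) = H + κ := Real.mul_self_sqrt hHκ.le
  have hcs : (N - H) / Real.sqrt (H + κ) * Real.sqrt (H + κ) = N - H := by
    field_simp
  rw [hR, hh, hh, hh, hh]
  set s := Real.sqrt (H + κ) with hsdef
  set c := (N - H) / s with hcdef
  have hcs2 : c * s = N - H := hcs
  clear_value s c
  linear_combination -(⟪Y, Z⟫ * ⟪X, W⟫ - ⟪X, Z⟫ * ⟪Y, W⟫) * hss - (⟪Y, Z⟫ * (η X * η W) - ⟪X, Z⟫ * (η Y * η W) + ⟪X, W⟫ * (η Y * η Z) -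
      ⟪Y, W⟫ * (η X * η Z)) * hcs
end

section
/- Let V be a real inner product space of finite dimension n ≥ 4, ξ ∈ V a unit vector, and H, N, κ ∈ ℝ with H + κ > 0. Define h(X,Y) = √(H+κ)·⟪X,Y⟫ + ((N−H)/√(H+κ))·⟪X,ξ⟫⟪Y,ξ⟫. If h' is a symmetric bilinear form on V satisfying h'(Y,Z)h'(X,W) − h'(X,Z)h'(Y,W) = h(Y,Z)h(X,W) − h(X,Z)h(Y,W) for all X, Y, Z, W ∈ V, then h' = h or h' = −h. -/
open scoped RealInnerProductSpace

/-- Algebraic core of Proposition 2.13: for `n ≥ 4` and `H + κ > 0`, a symmetric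
bilinear form with the same Kulkarni–Nomizu square as the second fundamental
form `h` of a 1-QC manifold immersed in `ℍ_κ^{n+1}` equals `h` or `-h`. -/
theorem stmt_4 {V : Type*} [NormedAddCommGroup V] [InnerProductSpace ℝ V]
    [FiniteDimensional ℝ V] (hdim : 4 ≤ Module.finrank ℝ V)
    (ξ : V) (hξ : ‖ξ‖ = 1) (H N κ : ℝ) (hHκ : 0 < H + κ)
    (h : V → V → ℝ)
    (hh : ∀ X Y, h X Y = Real.sqrt (H + κ) * ⟪X, Y⟫ +
      (N - H) / Real.sqrt (H + κ) * (⟪X, ξ⟫ * ⟪Y, ξ⟫))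
    (h' : LinearMap.BilinForm ℝ V) (hsymm : ∀ X Y, h' X Y = h' Y X)
    (hgauss : ∀ X Y Z W : V,
      h' Y Z * h' X W - h' X Z * h' Y W = h Y Z * h X W - h X Z * h Y W) :
    (∀ X Y, h' X Y = h X Y) ∨ (∀ X Y, h' X Y = - h X Y) := by
  classical
  set a := Real.sqrt (H + κ) with ha_def
  have ha : 0 < a := Real.sqrt_pos.mpr hHκ
  have haa : a * a ≠ 0 := by positivity
  -- values of h
  have hvL : ∀ X Y : V, ⟪X, ξ⟫ = 0 → h X Y = a * ⟪X, Y⟫ := by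
    intro X Y hX; rw [hh, hX]; ring
  have hvR : ∀ X Y : V, ⟪Y, ξ⟫ = 0 → h X Y = a * ⟪X, Y⟫ := by
    intro X Y hY; rw [hh, hY]; ring
  have hz : ∀ X Y : V, ⟪X, ξ⟫ = 0 → ⟪X, Y⟫ = 0 → h X Y = 0 := by
    intro X Y h1 h2; rw [hvL X Y h1, h2, mul_zero]
  have hzR : ∀ X Y : V, ⟪Y, ξ⟫ = 0 → ⟪Y, X⟫ = 0 → h X Y = 0 := by
    intro X Y h1 h2
    rw [hvR X Y h1, real_inner_comm, h2, mul_zero]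
  have hvd : ∀ u : V, ‖u‖ = 1 → ⟪u, ξ⟫ = 0 → h u u = a := by
    intro u hu h0
    rw [hvL u u h0, real_inner_self_eq_norm_sq, hu]; ring
  -- existence of unit vectors orthogonal to three given vectors
  have orth3 : ∀ x y z : V, ∃ u : V, ‖u‖ = 1 ∧ ⟪u, x⟫ = 0 ∧ ⟪u, y⟫ = 0 ∧ ⟪u, z⟫ = 0 := by
    intro x y z
    set K : Submodule ℝ V := Submodule.span ℝ (({x, y, z} : Finset V) : Set V) with hK
    have hKle : Module.finrank ℝ K ≤ 3 := by
      refine (finrank_span_finset_le_card (R := ℝ) {x, y, z}).trans ?_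
      refine (Finset.card_insert_le _ _).trans ?_
      have := Finset.card_insert_le y ({z} : Finset V)
      simp at this ⊢
      omega
    have hKV : Module.finrank ℝ K + Module.finrank ℝ Kᗮ = Module.finrank ℝ V :=
      K.finrank_add_finrank_orthogonal
    have hpos : 0 < Module.finrank ℝ Kᗮ := by omega
    obtain ⟨v, hv, hv0⟩ : ∃ v ∈ Kᗮ, v ≠ 0 := by
      rw [← Submodule.ne_bot_iff]
      intro hbot
      rw [hbot] at hpos
      simp at hpos
    have hmem : ∀ t : V, t ∈ ({x, y, z} : Finset V) → ⟪‖v‖⁻¹ • v, t⟫ = 0 := by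
      intro t ht
      have htK : t ∈ K := Submodule.subset_span (by exact_mod_cast ht)
      rw [real_inner_smul_left, Submodule.inner_left_of_mem_orthogonal htK hv, mul_zero]
    exact ⟨‖v‖⁻¹ • v, norm_smul_inv_norm hv0, hmem x (by simp), hmem y (by simp),
      hmem z (by simp)⟩
  -- core algebraic lemma on orthonormal triples orthogonal to ξ
  have lemA : ∀ u v w : V, ‖u‖ = 1 → ‖v‖ = 1 → ‖w‖ = 1 →
      ⟪u, ξ⟫ = 0 → ⟪v, ξ⟫ = 0 → ⟪w, ξ⟫ = 0 →
      ⟪u, v⟫ = 0 → ⟪u, w⟫ = 0 → ⟪v, w⟫ = 0 →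
      h' u u = h' v v ∧ h' u u * h' v v = a ^ 2 ∧ h' u v = 0 := by
    intro u v w hu hv hw hu0 hv0 hw0 huv huw hvw
    have hvu : ⟪v, u⟫ = 0 := by rw [real_inner_comm]; exact huv
    have hwu : ⟪w, u⟫ = 0 := by rw [real_inner_comm]; exact huw
    have hwv : ⟪w, v⟫ = 0 := by rw [real_inner_comm]; exact hvw
    set p := h' u u with hp; set q := h' v v with hq; set r := h' w w with hr
    set x := h' u v with hx; set y := h' u w with hy; set z := h' v w with hzz
    have sx : h' v u = x := hsymm v u
    have sy : h' w u = y := hsymm w u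
    have sz : h' w v = z := hsymm w v
    have e1 : p * q - x * x = a * a := by
      have := hgauss u v u v
      rw [hz v u hv0 hvu, hz u v hu0 huv, hvd u hu hu0, hvd v hv hv0, sx] at this
      linarith
    have e2 : p * r - y * y = a * a := by
      have := hgauss u w u w
      rw [hz w u hw0 hwu, hz u w hu0 huw, hvd u hu hu0, hvd w hw hw0, sy] at this
      linarith
    have e3 : q * r - z * z = a * a := by
      have := hgauss v w v w
      rw [hz w v hw0 hwv, hz v w hv0 hvw, hvd v hv hv0, hvd w hw hw0, sz] at this
      linarith
    have e4 : x * y - p * z = 0 := by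
      have := hgauss u v u w
      rw [hz v u hv0 hvu, hz u w hu0 huw, hvd u hu hu0, hz v w hv0 hvw, sx] at this
      linarith
    have e5 : z * x - q * y = 0 := by
      have := hgauss v w v u
      rw [hz w v hw0 hwv, hz v u hv0 hvu, hvd v hv hv0, hz w u hw0 hwu, sz, sx, sy] at this
      linarith
    have e6 : y * z - r * x = 0 := by
      have := hgauss w u w v
      rw [hz u w hu0 huw, hz w v hw0 hwv, hvd w hw hw0, hz u v hu0 huv, sz] at this
      linarith
    have hy0 : y = 0 := by
      have key : (a * a) * y = 0 := by linear_combination (-y) * e1 + (-x) * e4 + (-p) * e5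
      exact (mul_eq_zero.mp key).resolve_left haa
    have hp0 : p ≠ 0 := by
      intro hp'
      exact haa (by linear_combination (-1 : ℝ) * e2 + (-y) * hy0 + r * hp')
    have hz0 : z = 0 := by
      have : p * z = 0 := by linear_combination (-1 : ℝ) * e4 + x * hy0
      exact (mul_eq_zero.mp this).resolve_left hp0
    have hr0 : r ≠ 0 := by
      intro hr'
      exact haa (by linear_combination (-1 : ℝ) * e3 + (-z) * hz0 + q * hr')
    have hx0 : x = 0 := by
      have : r * x = 0 := by linear_combination (-1 : ℝ) * e6 + z * hy0
      exact (mul_eq_zero.mp this).resolve_left hr0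
    have epq : p * q = a * a := by linear_combination e1 + x * hx0
    have epr : p * r = a * a := by linear_combination e2 + y * hy0
    have eqr : q * r = a * a := by linear_combination e3 + z * hz0
    have hqr : q = r := by
      have hh' : p * (q - r) = 0 := by linear_combination epq - epr
      have := (mul_eq_zero.mp hh').resolve_left hp0
      linarith
    have hpq : p = q := by
      have hh' : r * (p - q) = 0 := by linear_combination epr - eqr - r * hqr + r * hqr
      have := (mul_eq_zero.mp hh').resolve_left hr0
      linarith
    exact ⟨hpq, by linear_combination epq, hx0⟩
  -- fix a reference unit vector e ⊥ ξ and set s = h' e e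
  obtain ⟨e, he, he0, -, -⟩ := orth3 ξ ξ ξ
  set s := h' e e with hs_def
  have hs2 : s * s = a * a := by
    obtain ⟨v, hv, hv0, hve, -⟩ := orth3 ξ e e
    obtain ⟨w, hw, hw0, hwe, hwv⟩ := orth3 ξ e v
    obtain ⟨heq, hprod, -⟩ := lemA e v w he hv hw he0 hv0 hw0
      (by rw [real_inner_comm]; exact hve) (by rw [real_inner_comm]; exact hwe)
      (by rw [real_inner_comm]; exact hwv)
    linear_combination hprod + s * heq
  have hs0 : s ≠ 0 := by
    intro h0
    exact haa (by linear_combination (-1 : ℝ) * hs2 + s * h0)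
  -- all unit vectors ⊥ ξ have the same diagonal value s
  have lemB : ∀ u : V, ‖u‖ = 1 → ⟪u, ξ⟫ = 0 → h' u u = s := by
    intro u hu hu0
    obtain ⟨v, hv, hv0, hvu, hve⟩ := orth3 ξ u e
    obtain ⟨w, hw, hw0, hwu, hwv⟩ := orth3 ξ u v
    obtain ⟨w', hw', hw'0, hw'e, hw'v⟩ := orth3 ξ e v
    obtain ⟨h1, -, -⟩ := lemA u v w hu hv hw hu0 hv0 hw0
      (by rw [real_inner_comm]; exact hvu) (by rw [real_inner_comm]; exact hwu)
      (by rw [real_inner_comm]; exact hwv)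
    obtain ⟨h2, -, -⟩ := lemA e v w' he hv hw' he0 hv0 hw'0
      (by rw [real_inner_comm]; exact hve) (by rw [real_inner_comm]; exact hw'e)
      (by rw [real_inner_comm]; exact hw'v)
    rw [h1, ← h2]
  -- h' u Z = s * ⟪u, Z⟫ for any unit u ⊥ ξ
  have lemC : ∀ u Z : V, ‖u‖ = 1 → ⟪u, ξ⟫ = 0 → h' u Z = s * ⟪u, Z⟫ := by
    intro u Z hu hu0
    obtain ⟨v, hv, hv0, hvu, hvZ⟩ := orth3 ξ u Z
    obtain ⟨w, hw, hw0, hwu, hwv⟩ := orth3 ξ u v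
    obtain ⟨-, -, huv0⟩ := lemA u v w hu hv hw hu0 hv0 hw0
      (by rw [real_inner_comm]; exact hvu) (by rw [real_inner_comm]; exact hwu)
      (by rw [real_inner_comm]; exact hwv)
    have hvv : h' v v = s := lemB v hv hv0
    have key := hgauss v Z v u
    rw [hsymm v u, huv0, hvv, hvd v hv hv0, hzR Z v hv0 hvZ, hz v u hv0 hvu,
      hvR Z u hu0] at key
    rw [hsymm u Z, real_inner_comm]
    apply mul_left_cancel₀ hs0
    linear_combination (-1 : ℝ) * key + (-(⟪Z, u⟫ : ℝ)) * hs2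
  -- the main identity
  have lemD : ∀ X Y : V, s * h' X Y = a * h X Y := by
    intro X Y
    obtain ⟨u, hu, hu0, huX, huY⟩ := orth3 ξ X Y
    have key := hgauss u X u Y
    rw [hsymm X u, lemC u X hu hu0, huX, lemC u Y hu hu0, huY, lemB u hu hu0,
      hvd u hu hu0, hzR X u hu0 huX, hz u Y hu0 huY] at key
    linear_combination (-1 : ℝ) * key
  have hcases : (s - a) * (s + a) = 0 := by linear_combination hs2
  rcases mul_eq_zero.mp hcases with hc | hc
  · have hsa : s = a := by linarith
    left
    intro X Y
    have hD := lemD X Y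
    rw [hsa] at hD
    exact mul_left_cancel₀ ha.ne' hD
  · have hsa : s = -a := by linarith
    right
    intro X Y
    have hD := lemD X Y
    rw [hsa] at hD
    apply mul_left_cancel₀ ha.ne'
    linear_combination (-1 : ℝ) * hD
end

section
/- Let V be a real inner product space of finite dimension at least 3, let h be a symmetric bilinear form on V, and let c ∈ ℝ be such that h(Y,Z)h(X,W) − h(X,Z)h(Y,W) = c·(⟪Y,Z⟫⟪X,W⟫ − ⟪X,Z⟫⟪Y,W⟫) for all X, Y, Z, W ∈ V. Then c ≥ 0, and if c > 0 then h(X,Y) = √c·⟪X,Y⟫ for all X, Y, or h(X,Y) = −√c·⟪X,Y⟫ for all X, Y. -/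
open scoped RealInnerProductSpace

/-- Algebraic content of Remark 2.14: if the Kulkarni–Nomizu square of a symmetric
bilinear form `h` is `c` times that of the inner product (with `dim V ≥ 3`), then
`c ≥ 0`, and if `c > 0` then `h = ±√c ⟪·,·⟫`. -/
theorem stmt_5 {V : Type*} [NormedAddCommGroup V] [InnerProductSpace ℝ V]
    [FiniteDimensional ℝ V] (hdim : 3 ≤ Module.finrank ℝ V)
    (h : LinearMap.BilinForm ℝ V) (hsymm : ∀ X Y, h X Y = h Y X) (c : ℝ)
    (hgauss : ∀ X Y Z W : V, h Y Z * h X W - h X Z * h Y W =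
      c * (⟪Y, Z⟫ * ⟪X, W⟫ - ⟪X, Z⟫ * ⟪Y, W⟫)) :
    0 ≤ c ∧ (0 < c →
      (∀ X Y, h X Y = Real.sqrt c * ⟪X, Y⟫) ∨
      (∀ X Y, h X Y = - Real.sqrt c * ⟪X, Y⟫)) := by
  classical
  -- operator A with ⟪A X, Y⟫ = h X Y
  set A : V →ₗ[ℝ] V :=
    { toFun := fun X => (InnerProductSpace.toDual ℝ V).symm
        (LinearMap.toContinuousLinearMap (h X))
      map_add' := by
        intro x y
        apply ext_inner_right ℝ
        intro z
        simp [InnerProductSpace.toDual_symm_apply, inner_add_left]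
      map_smul' := by
        intro r x
        apply ext_inner_right ℝ
        intro z
        simp [InnerProductSpace.toDual_symm_apply, real_inner_smul_left] } with hA
  have hAinner : ∀ X Y, ⟪A X, Y⟫ = h X Y := by
    intro X Y
    simp [hA, InnerProductSpace.toDual_symm_apply]
  have hAsymm : A.IsSymmetric := by
    intro x y
    rw [hAinner, real_inner_comm, hAinner, hsymm]
  set n := Module.finrank ℝ V with hn'
  have hn : Module.finrank ℝ V = n := rfl
  set b := hAsymm.eigenvectorBasis hn with hb
  set μ := hAsymm.eigenvalues hn with hμ
  have hbdiag : ∀ i j, h (b i) (b j) = if i = j then μ i else 0 := by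
    intro i j
    rw [← hAinner]
    rw [hAsymm.apply_eigenvectorBasis hn i]
    rw [real_inner_smul_left, orthonormal_iff_ite.mp b.orthonormal]
    split <;> simp [hμ]
  have key : ∀ i j : Fin n, i ≠ j → μ i * μ j = c := by
    intro i j hij
    have := hgauss (b i) (b j) (b j) (b i)
    rw [hbdiag, hbdiag, hbdiag, hbdiag] at this
    rw [orthonormal_iff_ite.mp b.orthonormal, orthonormal_iff_ite.mp b.orthonormal,
      orthonormal_iff_ite.mp b.orthonormal, orthonormal_iff_ite.mp b.orthonormal] at this
    simp [hij, hij.symm] at this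
    linarith
  have h3 : 3 ≤ n := hdim
  have i0 : Fin n := ⟨0, by omega⟩
  have i1 : Fin n := ⟨1, by omega⟩
  have i2 : Fin n := ⟨2, by omega⟩
  -- existence of a third index
  have exists_third : ∀ i j : Fin n, ∃ k, k ≠ i ∧ k ≠ j := by
    intro i j
    by_contra hc
    push_neg at hc
    have : (Finset.univ : Finset (Fin n)) ⊆ {i, j} := by
      intro k _
      rcases Classical.em (k = i) with hk | hk
      · simp [hk]
      · simp [hc k hk]
    have hcard : n ≤ 2 := by
      calc n = (Finset.univ : Finset (Fin n)).card := by simp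
        _ ≤ ({i, j} : Finset (Fin n)).card := Finset.card_le_card this
        _ ≤ 2 := Finset.card_insert_le _ _ |>.trans (by simp)
    omega
  rcases eq_or_ne c 0 with hc0 | hc0
  · exact ⟨le_of_eq hc0.symm, fun hc => absurd hc0 (by positivity)⟩
  -- c ≠ 0 : all eigenvalues are equal
  have hμne : ∀ i, μ i ≠ 0 := by
    intro i hi
    obtain ⟨k, hk, -⟩ := exists_third i i
    exact hc0 ((key k i hk).symm.trans (by rw [hi, mul_zero]))
  have hμeq : ∀ i j, μ i = μ j := by
    intro i j
    rcases eq_or_ne i j with rfl | hij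
    · rfl
    obtain ⟨k, hki, hkj⟩ := exists_third i j
    have h1 := key i k (fun e => hki e.symm)
    have h2 := key j k (fun e => hkj e.symm)
    exact mul_right_cancel₀ (hμne k) (h1.trans h2.symm)
  obtain ⟨k, hk, -⟩ := exists_third i0 i0
  have hcsq : c = μ i0 * μ i0 := by
    rw [← key k i0 hk, hμeq k i0]
  have hcpos : 0 < c := lt_of_le_of_ne (hcsq ▸ mul_self_nonneg _) (Ne.symm hc0)
  refine ⟨hcpos.le, fun _ => ?_⟩
  -- A = μ i0 • id
  have hAid : ∀ X, A X = μ i0 • X := by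
    have : A = μ i0 • (LinearMap.id : V →ₗ[ℝ] V) := by
      apply b.toBasis.ext
      intro i
      simp only [OrthonormalBasis.coe_toBasis, LinearMap.smul_apply, LinearMap.id_apply]
      rw [hAsymm.apply_eigenvectorBasis hn i]
      show μ i • b i = μ i0 • b i
      rw [hμeq i i0]
    intro X; rw [this]; rfl
  have hhX : ∀ X Y, h X Y = μ i0 * ⟪X, Y⟫ := by
    intro X Y
    rw [← hAinner, hAid, real_inner_smul_left]
  have habs : μ i0 = Real.sqrt c ∨ μ i0 = - Real.sqrt c := by
    have : Real.sqrt c = |μ i0| := by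
      rw [hcsq, ← sq, Real.sqrt_sq_eq_abs]
    rcases abs_cases (μ i0) with ⟨he, -⟩ | ⟨he, -⟩
    · left; rw [this, he]
    · right; rw [this, he]; ring
  rcases habs with he | he
  · left; intro X Y; rw [hhX, he]
  · right; intro X Y; rw [hhX, he]
end

section
/- Let h11, h22, h33, h12, h13, h23, μ, ν be real numbers with μ > 0 and ν ≠ 0, satisfying the six equations: h11·h22 − h12² = μ, h11·h33 − h13² = ν, h22·h33 − h23² = ν, h23·h11 = h12·h13, h13·h11 = h12·h23, and h12·h33 = h13·h23. Then h12 = h13 = h23 = 0, h11 = h22, h11² = μ, and h11·h33 = ν. -/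
/-- First case of Proposition 5.1: the Gauss system for a codimension-one
immersion of a 3-dimensional 1-QC manifold into `ℍ_κ^4` with `μ = H + κ > 0`
and `ν = N + κ ≠ 0` forces the off-diagonal terms to vanish and `h11 = h22`. -/
theorem stmt_6 (h11 h22 h33 h12 h13 h23 μ ν : ℝ) (hμ : 0 < μ) (hν : ν ≠ 0)
    (e1 : h11 * h22 - h12 ^ 2 = μ)
    (e2 : h11 * h33 - h13 ^ 2 = ν)
    (e3 : h22 * h33 - h23 ^ 2 = ν)
    (e4 : h23 * h11 = h12 * h13)
    (e5 : h13 * h11 = h12 * h23)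
    (e6 : h12 * h33 = h13 * h23) :
    h12 = 0 ∧ h13 = 0 ∧ h23 = 0 ∧ h11 = h22 ∧ h11 ^ 2 = μ ∧ h11 * h33 = ν := by
  have h12z : h12 = 0 := by
    have key : h12 * ν = 0 := by
      have : h12 * ν = h11 * (h12 * h33) - h12 * h13 ^ 2 := by rw [← e2]; ring
      rw [e6] at this
      have h4 : h12 * ν = h13 * (h23 * h11 - h12 * h13) := by rw [this]; ring
      rw [e4] at h4; simpa using h4
    exact (mul_eq_zero.mp key).resolve_right hν
  subst h12z
  have h11ne : h11 ≠ 0 := by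
    intro h; rw [h] at e1; simp at e1; nlinarith
  have h13z : h13 = 0 := by
    have := e5; simp at this; exact this.resolve_right h11ne
  have h23z : h23 = 0 := by
    have := e4; simp at this; exact this.resolve_right h11ne
  subst h13z; subst h23z
  have h33ne : h33 ≠ 0 := by
    intro h; rw [h] at e2; simp at e2; exact hν e2.symm
  have heq : h11 = h22 := by
    have : (h11 - h22) * h33 = 0 := by nlinarith
    have := (mul_eq_zero.mp this).resolve_right h33ne
    linarith
  subst heq
  exact ⟨rfl, rfl, rfl, rfl, by linear_combination e1, by linear_combination e2⟩
end
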